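/- Let A ∈ M_N(ℂ) and let x, y ∈ ℂ^N be orthonormal vectors. If ⟨Ax, x⟩ belongs to the topological boundary ∂W(A) of the numerical range of A and ⟨Ay, x⟩ = 0, then ⟨Ax, y⟩ = 0. -/

import Mathlib

noncomputable section

open Matrix Polynomial Filter Topology

/-- The numerical range of a matrix `A`: the set `{⟨Ax,x⟩ : ‖x‖ = 1}`, where
`⟨Ax,x⟩` (linear in the first slot) is Mathlib's `⟪x, Ax⟫`. -/
def numRange {N : ℕ} (A : Matrix (Fin N) (Fin N) ℂ) : Set ℂ :=
  {z | ∃ x : EuclideanSpace ℂ (Fin N), ‖x‖ = 1 ∧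
    (inner ℂ x (Matrix.toEuclideanCLM (𝕜 := ℂ) A x) : ℂ) = z}

/-- The Crouzeix ratio `ψ(A)`. -/
def crouzeixRatio {N : ℕ} (A : Matrix (Fin N) (Fin N) ℂ) : ℝ :=
  sSup {r : ℝ | ∃ p : Polynomial ℂ,
    (∀ z ∈ numRange A, ‖Polynomial.eval z p‖ ≤ 1) ∧
    r = ‖Matrix.toEuclideanCLM (𝕜 := ℂ) (Polynomial.aeval A p)‖}

/-- The constant `C_N`. -/
def crouzeixConst (N : ℕ) : ℝ :=
  sSup {r : ℝ | ∃ A : Matrix (Fin N) (Fin N) ℂ, r = crouzeixRatio A}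

/-!
Compressing `A` to `span {x, y}` gives the lower triangular matrix `B = [[a, 0], [c, d]]` with
`a = ⟨Ax,x⟩`, `c = ⟨Ax,y⟩`, `d = ⟨Ay,y⟩`. The Rayleigh quotient of `A` at `x + conj β • y` is
`a + β c + O(|β|²)`, so when `c ≠ 0` its real derivative at `β = 0` is invertible and, by the
inverse function theorem, `a` is an interior point of `W(A)`.
-/

open Set
open scoped InnerProductSpace ComplexConjugate

theorem HasStrictFDerivAt.mem_interior_range {E F : Type*} [NormedAddCommGroup E]
    [NormedSpace ℝ E] [CompleteSpace E] [NormedAddCommGroup F] [NormedSpace ℝ F]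
    {f : E → F} {f' : E ≃L[ℝ] F} {x : E} (hf : HasStrictFDerivAt f (f' : E →L[ℝ] F) x) :
    f x ∈ interior (range f) := by
  rw [mem_interior_iff_mem_nhds, ← hf.map_nhds_eq_of_equiv]
  exact range_mem_map

/-- The Rayleigh quotient of `[[a, 0], [c, d]]` at the vector `(1, conj β)`. -/
def lowerTriangularRayleigh (a c d β : ℂ) : ℂ :=
  (1 + ‖β‖ ^ 2)⁻¹ • (a + β * c + ‖β‖ ^ 2 • d)

theorem hasStrictFDerivAt_lowerTriangularRayleigh (a d : ℂ) {c : ℂ} (hc : c ≠ 0) :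
    HasStrictFDerivAt (lowerTriangularRayleigh a c d)
      (((ContinuousLinearEquiv.unitsEquivAut ℂ (Units.mk0 c hc)).restrictScalars ℝ :
        ℂ ≃L[ℝ] ℂ) : ℂ →L[ℝ] ℂ) 0 := by
  have hnorm := hasStrictFDerivAt_norm_sq (0 : ℂ)
  have hden := (hasStrictDerivAt_inv (by simp : (1 + ‖(0 : ℂ)‖ ^ 2) ≠ 0)).comp_hasStrictFDerivAt
    (0 : ℂ) (hnorm.const_add 1)
  have hnum := (((hasStrictFDerivAt_id (𝕜 := ℝ) (0 : ℂ)).mul_const c).const_add a).add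
    (hnorm.smul_const d)
  exact (hden.smul hnum).congr_fderiv (by ext; simp [mul_comm])

theorem mem_interior_range_lowerTriangularRayleigh (a d : ℂ) {c : ℂ} (hc : c ≠ 0) :
    a ∈ interior (range (lowerTriangularRayleigh a c d)) := by
  simpa [lowerTriangularRayleigh] using
    (hasStrictFDerivAt_lowerTriangularRayleigh a d hc).mem_interior_range

theorem inner_div_norm_sq_mem_numRange {N : ℕ} (A : Matrix (Fin N) (Fin N) ℂ)
    {v : EuclideanSpace ℂ (Fin N)} (hv : v ≠ 0) :
    ⟪v, Matrix.toEuclideanCLM (𝕜 := ℂ) A v⟫_ℂ / ((‖v‖ ^ 2 : ℝ) : ℂ) ∈ numRange A := by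
  have hv' : (‖v‖ : ℂ) ≠ 0 := by simpa using hv
  refine ⟨(‖v‖⁻¹ : ℂ) • v, by simp [norm_smul, hv], ?_⟩
  simp only [map_smul, inner_smul_left, inner_smul_right, map_inv₀, Complex.conj_ofReal]
  push_cast
  field_simp

theorem inner_add_conj_smul_apply_add_conj_smul {E : Type*} [NormedAddCommGroup E]
    [InnerProductSpace ℂ E] (T : E →L[ℂ] E) {x y : E} (hTyx : ⟪x, T y⟫_ℂ = 0) (β : ℂ) :
    ⟪x + conj β • y, T (x + conj β • y)⟫_ℂ =
      ⟪x, T x⟫_ℂ + β * ⟪y, T x⟫_ℂ + ‖β‖ ^ 2 * ⟪y, T y⟫_ℂ := by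
  simp only [map_add, map_smul, inner_add_left, inner_add_right, inner_smul_left,
    inner_smul_right, hTyx, Complex.conj_conj, ← Complex.conj_mul']
  ring

theorem norm_add_smul_sq_of_inner_eq_zero {𝕜 E : Type*} [RCLike 𝕜] [NormedAddCommGroup E]
    [InnerProductSpace 𝕜 E] {x y : E} (hxy : ⟪x, y⟫_𝕜 = 0) (b : 𝕜) :
    ‖x + b • y‖ ^ 2 = ‖x‖ ^ 2 + ‖b‖ ^ 2 * ‖y‖ ^ 2 := by
  rw [@norm_add_sq 𝕜, inner_smul_right, hxy, norm_smul]
  simp [mul_pow]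

theorem lowerTriangularRayleigh_mem_numRange {N : ℕ} (A : Matrix (Fin N) (Fin N) ℂ)
    {x y : EuclideanSpace ℂ (Fin N)} (hx : ‖x‖ = 1) (hy : ‖y‖ = 1) (hxy : ⟪x, y⟫_ℂ = 0)
    (hTyx : ⟪x, Matrix.toEuclideanCLM (𝕜 := ℂ) A y⟫_ℂ = 0) (β : ℂ) :
    lowerTriangularRayleigh ⟪x, Matrix.toEuclideanCLM (𝕜 := ℂ) A x⟫_ℂ
      ⟪y, Matrix.toEuclideanCLM (𝕜 := ℂ) A x⟫_ℂ ⟪y, Matrix.toEuclideanCLM (𝕜 := ℂ) A y⟫_ℂ β ∈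
      numRange A := by
  have hv : ‖x + conj β • y‖ ^ 2 = 1 + ‖β‖ ^ 2 := by
    rw [norm_add_smul_sq_of_inner_eq_zero hxy, hx, hy, Complex.norm_conj]
    ring
  have hv0 : x + conj β • y ≠ 0 := by
    intro h
    rw [h, norm_zero] at hv
    nlinarith [norm_nonneg β]
  convert inner_div_norm_sq_mem_numRange A hv0 using 1
  rw [inner_add_conj_smul_apply_add_conj_smul _ hTyx, hv, lowerTriangularRayleigh]
  simp only [div_eq_inv_mul, Complex.real_smul]
  push_cast
  ring

/-- if `x, y` are orthonormal, `⟨Ax,x⟩ ∈ ∂W(A)` and `⟨Ay,x⟩ = 0`, then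
`⟨Ax,y⟩ = 0`.  (Here `⟨Au,v⟩`, linear in the first slot, is Mathlib's `⟪v, Au⟫`.) -/
theorem stmt10 {N : ℕ} (A : Matrix (Fin N) (Fin N) ℂ)
    (x y : EuclideanSpace ℂ (Fin N)) (hx : ‖x‖ = 1) (hy : ‖y‖ = 1)
    (hxy : (inner ℂ x y : ℂ) = 0)
    (h1 : (inner ℂ x (Matrix.toEuclideanCLM (𝕜 := ℂ) A x) : ℂ) ∈ frontier (numRange A))
    (h2 : (inner ℂ x (Matrix.toEuclideanCLM (𝕜 := ℂ) A y) : ℂ) = 0) :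
    (inner ℂ y (Matrix.toEuclideanCLM (𝕜 := ℂ) A x) : ℂ) = 0 := by
  by_contra hc
  refine h1.2 (interior_mono ?_ (mem_interior_range_lowerTriangularRayleigh _
    (inner ℂ y (Matrix.toEuclideanCLM (𝕜 := ℂ) A y)) hc))
  rintro _ ⟨β, rfl⟩
  exact lowerTriangularRayleigh_mem_numRange A hx hy hxy h2 β
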